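/- Let r > 0, A ∈ ℝ^{n×n}, B ∈ ℝ^{n×m}, k ∈ ℝ^{m×n}. There exist constants M, L > 0 (depending only on A, B, k, r) such that for every ε ∈ (0, r], every measurable d : [0,∞) → [−1,1], every x₀ ∈ ℝⁿ and every continuous u₀ : [−r−ε,0] → ℝᵐ with u₀(0) = k e^{Ar} x₀ + k ∫_{−r}^{0} e^{−As} B u₀(s) ds, every solution (x, u) of the closed-loop system with initial conditions x(0) = x₀ and u = u₀ on [−r−ε,0] satisfies the exponential growth estimate |x(t)| + |u(t)| ≤ M e^{Lt} (|x₀| + max_{−r−ε ≤ s ≤ 0} |u₀(s)|) for all t ≥ 0. -/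

import Mathlib

open MeasureTheory

/-- Matrix-vector multiplication between Euclidean spaces. -/
noncomputable def mv {n m : ℕ} (A : Matrix (Fin n) (Fin m) ℝ)
    (x : EuclideanSpace ℝ (Fin m)) : EuclideanSpace ℝ (Fin n) :=
  Matrix.toEuclideanLin A x

/-- `mexp A t = exp (t A)`, the matrix exponential. -/
noncomputable def mexp {n : ℕ} (A : Matrix (Fin n) (Fin n) ℝ) (t : ℝ) :
    Matrix (Fin n) (Fin n) ℝ :=
  NormedSpace.exp (t • A)

/-!
On a window `[T, T + δ]` with `δ ≤ r`, the predictor integral `∫_t^{t+r} e^{A(t+r-s)} B u(s-r) ds`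
sees the window only through a piece of length at most `δ`; everything else is history before `T`.
Hence the maximum `Q` of `|x| + |u|` on the window satisfies `Q ≤ C₀ c + C₁ δ Q`, where `c` bounds
the history, and for `C₁ δ ≤ 1/2` the bound grows by at most the factor `K = 2 C₀` per window,
i.e. like `K^{t/δ + 1} = K e^{(log K / δ) t}`. Neither `C₀`, `C₁` nor `δ` depend on `ε` or `d`:
the perturbed delay only has to stay in `[-(r + ε), s]`.
-/

open Set Real

theorem IsCompact.le_div_of_forall_le_add_mul {α : Type*} [TopologicalSpace α] {K : Set α}
    (hK : IsCompact K) (hne : K.Nonempty) {φ : α → ℝ} (hφ : ContinuousOn φ K) {a θ : ℝ}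
    (hθ : θ < 1) (h : ∀ Q, (∀ t ∈ K, φ t ≤ Q) → ∀ t ∈ K, φ t ≤ a + θ * Q) :
    ∀ t ∈ K, φ t ≤ a / (1 - θ) := by
  obtain ⟨t₀, ht₀, hmax⟩ := hK.exists_isMaxOn hne hφ
  have hle : ∀ t ∈ K, φ t ≤ φ t₀ := fun t ht => hmax ht
  have hself : φ t₀ * (1 - θ) ≤ a := by linarith [h _ hle t₀ ht₀]
  exact fun t ht => (hle t ht).trans ((le_div_iff₀ (by linarith)).2 hself)

theorem intervalIntegral.norm_integral_le_add_of_norm_le_const {E : Type*}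
    [NormedAddCommGroup E] [NormedSpace ℝ E] {f : ℝ → E} {a b c C₁ C₂ : ℝ} (hab : a ≤ b)
    (hbc : b ≤ c) (hf : IntervalIntegrable f volume a c) (h₁ : ∀ s ∈ Ioc a b, ‖f s‖ ≤ C₁)
    (h₂ : ∀ s ∈ Ioc b c, ‖f s‖ ≤ C₂) :
    ‖∫ s in a..c, f s‖ ≤ C₁ * (b - a) + C₂ * (c - b) := by
  have hsub₁ : uIcc a b ⊆ uIcc a c := by
    rw [uIcc_of_le hab, uIcc_of_le (hab.trans hbc)]; exact Icc_subset_Icc_right hbc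
  have hsub₂ : uIcc b c ⊆ uIcc a c := by
    rw [uIcc_of_le hbc, uIcc_of_le (hab.trans hbc)]; exact Icc_subset_Icc_left hab
  rw [← intervalIntegral.integral_add_adjacent_intervals (hf.mono_set hsub₁) (hf.mono_set hsub₂)]
  refine (norm_add_le _ _).trans (add_le_add ?_ ?_)
  · rw [← abs_of_nonneg (sub_nonneg.2 hab)]
    exact intervalIntegral.norm_integral_le_of_norm_le_const (by rwa [uIoc_of_le hab])
  · rw [← abs_of_nonneg (sub_nonneg.2 hbc)]
    exact intervalIntegral.norm_integral_le_of_norm_le_const (by rwa [uIoc_of_le hbc])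

theorem ContinuousOn.integrableOn_comp_of_mapsTo {E : Type*} [NormedAddCommGroup E]
    {u : ℝ → E} {a b : ℝ} (hu : ContinuousOn u (Ici a)) {τ : ℝ → ℝ} (hτ : Measurable τ)
    {S : Set ℝ} (hS : MeasurableSet S) (hSfin : volume S ≠ ⊤) (hmaps : MapsTo τ S (Icc a b)) :
    IntegrableOn (fun s => u (τ s)) S := by
  have hv : Continuous fun s => u (max s a) :=
    hu.comp_continuous (continuous_id.max continuous_const) fun s => le_max_right s a
  obtain ⟨C, hC⟩ := isCompact_Icc.exists_bound_of_continuousOn (hv.continuousOn (s := Icc a b))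
  have hvτ : IntegrableOn (fun s => u (max (τ s) a)) S :=
    Measure.integrableOn_of_bounded hSfin (hv.comp_aestronglyMeasurable hτ.aestronglyMeasurable)
      ((ae_restrict_iff' hS).2 (ae_of_all _ fun s hs => hC _ (hmaps hs)))
  exact hvτ.congr_fun (fun s hs => by simp only [max_eq_left (hmaps hs).1]) hS

theorem pow_natCeil_div_le_mul_exp {K δ t : ℝ} (hK : 1 ≤ K) (hδ : 0 < δ) (ht : 0 ≤ t) :
    K ^ ⌈t / δ⌉₊ ≤ K * exp (log K / δ * t) := by
  have hK₀ : 0 < K := by linarith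
  have hceil : (⌈t / δ⌉₊ : ℝ) ≤ t / δ + 1 := (Nat.ceil_lt_add_one (by positivity)).le
  have hlog : 0 ≤ log K := log_nonneg hK
  calc K ^ ⌈t / δ⌉₊ = exp (⌈t / δ⌉₊ * log K) := by rw [exp_nat_mul, exp_log hK₀]
    _ ≤ exp (log K + log K / δ * t) := exp_le_exp.2 (by
        rw [show log K + log K / δ * t = (t / δ + 1) * log K by ring]
        exact mul_le_mul_of_nonneg_right hceil hlog)
    _ = K * exp (log K / δ * t) := by rw [exp_add, exp_log hK₀]

section ClosedLoop

variable {X U : Type*} [NormedAddCommGroup X] [NormedAddCommGroup U]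

def HistoryBound (x : ℝ → X) (u : ℝ → U) (h T c : ℝ) : Prop :=
  (∀ s ∈ Icc (-h) T, ‖u s‖ ≤ c) ∧ ∀ s ∈ Icc 0 T, ‖x s‖ ≤ c

namespace HistoryBound

variable {x : ℝ → X} {u : ℝ → U} {h T c : ℝ}

theorem nonneg (hc : HistoryBound x u h T c) (hT : 0 ≤ T) : 0 ≤ c :=
  (norm_nonneg _).trans (hc.2 0 ⟨le_rfl, hT⟩)

theorem mono (hc : HistoryBound x u h T c) {c' : ℝ} (hcc : c ≤ c') : HistoryBound x u h T c' :=
  ⟨fun s hs => (hc.1 s hs).trans hcc, fun s hs => (hc.2 s hs).trans hcc⟩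

theorem extend (hc : HistoryBound x u h T c) {T' Q : ℝ}
    (hQ : ∀ s ∈ Icc T T', ‖x s‖ + ‖u s‖ ≤ Q) : HistoryBound x u h T' (max c Q) := by
  refine ⟨fun s hs => ?_, fun s hs => ?_⟩ <;> rcases le_total s T with hsT | hTs
  · exact (hc.1 s ⟨hs.1, hsT⟩).trans (le_max_left _ _)
  · exact (le_add_of_nonneg_left (norm_nonneg _)).trans
      ((hQ s ⟨hTs, hs.2⟩).trans (le_max_right _ _))
  · exact (hc.2 s ⟨hs.1, hsT⟩).trans (le_max_left _ _)
  · exact (le_add_of_nonneg_right (norm_nonneg _)).trans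
      ((hQ s ⟨hTs, hs.2⟩).trans (le_max_right _ _))

end HistoryBound

variable [NormedSpace ℝ X] [NormedSpace ℝ U]

/-- The closed loop for a general delayed argument `τ s ∈ [-h, s]`; the system of the theorem
is `τ s = s - r - ε d s`, `h = r + ε`, with `Φ σ` standing for `exp (σ A)`. -/
structure IsClosedLoopSolution (a : X →L[ℝ] X) (b : U →L[ℝ] X) (κ : X →L[ℝ] U)
    (Φ : ℝ → X →L[ℝ] X) (r h : ℝ) (τ : ℝ → ℝ) (x : ℝ → X) (u : ℝ → U) : Prop where
  continuousOn_x : ContinuousOn x (Ici 0)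
  continuousOn_u : ContinuousOn u (Ici (-h))
  measurable_delay : Measurable τ
  delay_mem : ∀ s, 0 ≤ s → τ s ∈ Icc (-h) s
  x_eq : ∀ t, 0 ≤ t → x t = x 0 + ∫ s in 0..t, (a (x s) + b (u (τ s)))
  u_eq : ∀ t, 0 ≤ t →
    u t = κ (Φ r (x t)) + κ (∫ s in t..t + r, Φ (t + r - s) (b (u (s - r))))

namespace IsClosedLoopSolution

variable {a : X →L[ℝ] X} {b : U →L[ℝ] X} {κ : X →L[ℝ] U} {Φ : ℝ → X →L[ℝ] X} {r h : ℝ}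
  {τ : ℝ → ℝ} {x : ℝ → X} {u : ℝ → U}

theorem intervalIntegrable_rhs (sol : IsClosedLoopSolution a b κ Φ r h τ x u) {t : ℝ}
    (ht : 0 ≤ t) :
    IntervalIntegrable (fun s => a (x s) + b (u (τ s))) volume 0 t := by
  refine IntervalIntegrable.add ?_ ?_
  · exact (a.continuous.comp_continuousOn (sol.continuousOn_x.mono fun s hs => by
      rw [uIcc_of_le ht] at hs; exact hs.1)).intervalIntegrable
  · rw [intervalIntegrable_iff_integrableOn_Ioc_of_le ht]
    exact b.integrable_comp (sol.continuousOn_u.integrableOn_comp_of_mapsTo sol.measurable_delay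
      measurableSet_Ioc measure_Ioc_lt_top.ne fun s hs =>
        ⟨(sol.delay_mem s hs.1.le).1, (sol.delay_mem s hs.1.le).2.trans hs.2⟩)

theorem x_eq_add_integral (sol : IsClosedLoopSolution a b κ Φ r h τ x u) {T t : ℝ}
    (hT : 0 ≤ T) (hTt : T ≤ t) :
    x t = x T + ∫ s in T..t, (a (x s) + b (u (τ s))) := by
  have ht : 0 ≤ t := hT.trans hTt
  rw [sol.x_eq t ht, sol.x_eq T hT, add_assoc, intervalIntegral.integral_add_adjacent_intervals
    (sol.intervalIntegrable_rhs hT) ((sol.intervalIntegrable_rhs ht).mono_set ?_)]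
  rw [uIcc_of_le hTt, uIcc_of_le ht]
  exact Icc_subset_Icc hT le_rfl

theorem norm_x_le (sol : IsClosedLoopSolution a b κ Φ r h τ x u) {T t c c' : ℝ}
    (hT : 0 ≤ T) (hTt : T ≤ t) (hc : HistoryBound x u h T c) (hc' : HistoryBound x u h t c') :
    ‖x t‖ ≤ c + (‖a‖ + ‖b‖) * c' * (t - T) := by
  have hrhs : ∀ s ∈ uIoc T t, ‖a (x s) + b (u (τ s))‖ ≤ (‖a‖ + ‖b‖) * c' := by
    intro s hs
    rw [uIoc_of_le hTt] at hs
    have hs₀ : 0 ≤ s := hT.trans hs.1.le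
    have hx : ‖x s‖ ≤ c' := hc'.2 s ⟨hs₀, hs.2⟩
    have hu : ‖u (τ s)‖ ≤ c' :=
      hc'.1 _ ⟨(sol.delay_mem s hs₀).1, (sol.delay_mem s hs₀).2.trans hs.2⟩
    calc ‖a (x s) + b (u (τ s))‖ ≤ ‖a‖ * ‖x s‖ + ‖b‖ * ‖u (τ s)‖ :=
          (norm_add_le _ _).trans (add_le_add (a.le_opNorm _) (b.le_opNorm _))
      _ ≤ (‖a‖ + ‖b‖) * c' := by rw [add_mul]; gcongr
  calc ‖x t‖ ≤ ‖x T‖ + ‖∫ s in T..t, (a (x s) + b (u (τ s)))‖ := by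
        rw [sol.x_eq_add_integral hT hTt]; exact norm_add_le _ _
    _ ≤ c + (‖a‖ + ‖b‖) * c' * (t - T) := by
        refine add_le_add (hc.2 T ⟨hT, le_rfl⟩) ?_
        simpa [abs_of_nonneg (sub_nonneg.2 hTt)] using
          intervalIntegral.norm_integral_le_of_norm_le_const hrhs

theorem norm_u_le (sol : IsClosedLoopSolution a b κ Φ r h τ x u) {E T t c c' : ℝ}
    (hrh : r ≤ h) (hΦ : ContinuousOn Φ (Icc 0 r)) (hE : ∀ σ ∈ Icc 0 r, ‖Φ σ‖ ≤ E)
    (hT : 0 ≤ T) (hTt : T ≤ t) (htr : t ≤ T + r)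
    (hc : HistoryBound x u h T c) (hc' : HistoryBound x u h t c') :
    ‖u t‖ ≤ ‖κ‖ * ‖Φ r‖ * ‖x t‖ + ‖κ‖ * (E * ‖b‖) * (c * r + c' * (t - T)) := by
  have ht : 0 ≤ t := hT.trans hTt
  have hc₀ : 0 ≤ c := hc.nonneg hT
  have hE₀ : 0 ≤ E := (norm_nonneg _).trans (hE 0 ⟨le_rfl, by linarith⟩)
  set g : ℝ → X := fun s => Φ (t + r - s) (b (u (s - r)))
  have hmaps : MapsTo (fun s => t + r - s) (uIcc t (t + r)) (Icc 0 r) := fun s hs => by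
    rw [uIcc_of_le (by linarith)] at hs; constructor <;> linarith [hs.1, hs.2]
  have hg_cont : ContinuousOn g (uIcc t (t + r)) := by
    refine (hΦ.comp (by fun_prop) hmaps).clm_apply (b.continuous.comp_continuousOn ?_)
    refine sol.continuousOn_u.comp (by fun_prop) fun s hs => ?_
    rw [uIcc_of_le (by linarith)] at hs
    simp only [mem_Ici]; linarith [hs.1]
  have hg_le : ∀ {s C}, t ≤ s → s ≤ t + r → ‖u (s - r)‖ ≤ C → ‖g s‖ ≤ E * ‖b‖ * C := by
    intro s C hts hst hu
    calc ‖g s‖ ≤ ‖Φ (t + r - s)‖ * (‖b‖ * ‖u (s - r)‖) :=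
          ((Φ _).le_opNorm _).trans (by gcongr; exact b.le_opNorm _)
      _ ≤ E * ‖b‖ * C := by
          rw [mul_assoc]
          gcongr
          · exact hE _ (hmaps (by rw [uIcc_of_le (by linarith)]; exact ⟨hts, hst⟩))
  -- split `[t, t + r]` at `T + r`: before it `s - r` lies in the history, after it in `[T, t]`
  have hint : ‖∫ s in t..t + r, g s‖ ≤ E * ‖b‖ * (c * r + c' * (t - T)) := by
    refine (intervalIntegral.norm_integral_le_add_of_norm_le_const (b := T + r) (by linarith)
      (by linarith) hg_cont.intervalIntegrable
      (fun s hs => hg_le hs.1.le (by linarith [hs.2])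
        (hc.1 _ ⟨by linarith [hs.1], by linarith [hs.2]⟩))
      (fun s hs => hg_le (by linarith [hs.1]) hs.2
        (hc'.1 _ ⟨by linarith [hs.1], by linarith [hs.2]⟩))).trans ?_
    have : E * ‖b‖ * c * (T + r - t) ≤ E * ‖b‖ * c * r :=
      mul_le_mul_of_nonneg_left (by linarith) (by positivity)
    linarith
  calc ‖u t‖ ≤ ‖κ‖ * (‖Φ r‖ * ‖x t‖) + ‖κ‖ * ‖∫ s in t..t + r, g s‖ := by
        rw [sol.u_eq t ht]
        exact (norm_add_le _ _).trans (add_le_add ((κ.le_opNorm _).trans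
          (by gcongr; exact (Φ r).le_opNorm _)) (κ.le_opNorm _))
    _ ≤ _ := by rw [← mul_assoc, mul_assoc ‖κ‖ (E * ‖b‖)]; gcongr

theorem historyBound_add (sol : IsClosedLoopSolution a b κ Φ r h τ x u) {E δ T c : ℝ}
    (hrh : r ≤ h) (hΦ : ContinuousOn Φ (Icc 0 r)) (hE : ∀ σ ∈ Icc 0 r, ‖Φ σ‖ ≤ E)
    (hδ : 0 ≤ δ) (hδr : δ ≤ r)
    (hδC : ((1 + ‖κ‖ * ‖Φ r‖) * (‖a‖ + ‖b‖) + ‖κ‖ * (E * ‖b‖)) * δ ≤ 1 / 2)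
    (hT : 0 ≤ T) (hc : HistoryBound x u h T c) :
    HistoryBound x u h (T + δ)
      (2 * ((1 + ‖κ‖ * ‖Φ r‖) * (1 + (‖a‖ + ‖b‖) * r) + 2 * (‖κ‖ * (E * ‖b‖)) * r) * c) := by
  rw [mul_assoc 2]
  set Γ := ‖κ‖ * ‖Φ r‖
  set Λ := ‖a‖ + ‖b‖
  set Θ := ‖κ‖ * (E * ‖b‖)
  have hc₀ : 0 ≤ c := hc.nonneg hT
  have hE₀ : 0 ≤ E := (norm_nonneg _).trans (hE 0 ⟨le_rfl, hδ.trans hδr⟩)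
  have hΘ : 0 ≤ Θ := by positivity
  have hΓΛ : 0 ≤ (1 + Γ) * Λ := by positivity
  set α := ((1 + Γ) * (1 + Λ * r) + 2 * Θ * r) * c
  have hwindow : ∀ t ∈ Icc T (T + δ), ‖x t‖ + ‖u t‖ ≤ α / (1 - 1 / 2) := by
    refine isCompact_Icc.le_div_of_forall_le_add_mul (nonempty_Icc.2 (by linarith)) ?_
      (by norm_num) fun Q hQ t ht => ?_
    · exact (sol.continuousOn_x.mono fun s hs => hT.trans hs.1).norm.add
        (sol.continuousOn_u.mono fun s hs => by simp only [mem_Ici]; linarith [hs.1]).norm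
    have hQ₀ : 0 ≤ Q := (by positivity : 0 ≤ ‖x T‖ + ‖u T‖).trans (hQ T ⟨le_rfl, by linarith⟩)
    have hc' : HistoryBound x u h t (max c Q) :=
      hc.extend fun s hs => hQ s ⟨hs.1, hs.2.trans ht.2⟩
    have hx := sol.norm_x_le hT ht.1 hc hc'
    have hu := sol.norm_u_le hrh hΦ hE hT ht.1 (by linarith [ht.2]) hc hc'
    have hpiece : max c Q * (t - T) ≤ c * r + Q * δ := by
      have := max_le_add_of_nonneg hc₀ hQ₀
      have : 0 ≤ t - T := by linarith [ht.1]
      nlinarith [ht.2]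
    linarith [mul_le_mul_of_nonneg_left hx (by positivity : (0 : ℝ) ≤ 1 + Γ),
      mul_le_mul_of_nonneg_left hpiece hΓΛ, mul_le_mul_of_nonneg_left hpiece hΘ,
      mul_le_mul_of_nonneg_right hδC hQ₀]
  have hr₀ : 0 ≤ r := hδ.trans hδr
  have hgain : 1 ≤ (1 + Γ) * (1 + Λ * r) + 2 * Θ * r :=
    le_add_of_le_of_nonneg (one_le_mul_of_one_le_of_one_le
      (le_add_of_nonneg_right (by positivity)) (le_add_of_nonneg_right (by positivity)))
      (by positivity)
  have hcα : c ≤ 2 * α := by linarith [le_mul_of_one_le_left hc₀ hgain]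
  exact (hc.extend fun t ht => (hwindow t ht).trans_eq (by ring)).mono (max_le hcα le_rfl)

end IsClosedLoopSolution

theorem exists_norm_add_norm_le_mul_exp (a : X →L[ℝ] X) (b : U →L[ℝ] X) (κ : X →L[ℝ] U)
    {Φ : ℝ → X →L[ℝ] X} {r : ℝ} (hΦ : ContinuousOn Φ (Icc 0 r)) (hr : 0 < r) :
    ∃ M L : ℝ, 0 < M ∧ 0 < L ∧ ∀ (h : ℝ) (τ : ℝ → ℝ) (x : ℝ → X) (u : ℝ → U) (c : ℝ),
      r ≤ h → IsClosedLoopSolution a b κ Φ r h τ x u → HistoryBound x u h 0 c →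
        ∀ t, 0 ≤ t → ‖x t‖ + ‖u t‖ ≤ M * exp (L * t) * c := by
  obtain ⟨E, hE⟩ := isCompact_Icc.exists_bound_of_continuousOn hΦ
  have hE₀ : 0 ≤ E := (norm_nonneg _).trans (hE 0 ⟨le_rfl, hr.le⟩)
  set C := (1 + ‖κ‖ * ‖Φ r‖) * (‖a‖ + ‖b‖) + ‖κ‖ * (E * ‖b‖)
  have hC : 0 ≤ C := by positivity
  set δ := r / (1 + 2 * C * r)
  have hδ : 0 < δ := by positivity
  have hδr : δ ≤ r := div_le_self hr.le (by nlinarith)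
  have hδC : C * δ ≤ 1 / 2 := by
    rw [mul_div_assoc', div_le_iff₀ (by positivity)]; linarith
  set K := 2 * ((1 + ‖κ‖ * ‖Φ r‖) * (1 + (‖a‖ + ‖b‖) * r) + 2 * (‖κ‖ * (E * ‖b‖)) * r)
  have hK : 2 ≤ K := by
    have : 1 ≤ (1 + ‖κ‖ * ‖Φ r‖) * (1 + (‖a‖ + ‖b‖) * r) :=
      one_le_mul_of_one_le_of_one_le (by simp; positivity) (by simp; positivity)
    have : 0 ≤ 2 * (‖κ‖ * (E * ‖b‖)) * r := by positivity
    linarith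
  refine ⟨2 * K, log K / δ, by positivity, div_pos (log_pos (by linarith)) hδ, ?_⟩
  intro h τ x u c hrh sol hc t ht
  have hiter : ∀ j : ℕ, HistoryBound x u h (j * δ) (K ^ j * c) := by
    intro j
    induction j with
    | zero => simpa using hc
    | succ j ih =>
      convert sol.historyBound_add hrh hΦ hE hδ.le hδr hδC (by positivity) ih using 1 <;>
        push_cast <;> ring
  set j := ⌈t / δ⌉₊
  have htj : t ≤ j * δ := (div_le_iff₀ hδ).1 (Nat.le_ceil _)
  obtain ⟨hu, hx⟩ := hiter j
  calc ‖x t‖ + ‖u t‖ ≤ 2 * (K ^ j * c) := by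
        linarith [hx t ⟨ht, htj⟩, hu t ⟨by linarith, htj⟩]
    _ ≤ 2 * (K * exp (log K / δ * t) * c) := by
        gcongr
        · exact hc.nonneg le_rfl
        · exact pow_natCeil_div_le_mul_exp (by linarith) hδ ht
    _ = 2 * K * exp (log K / δ * t) * c := by ring

end ClosedLoop

noncomputable def matrixCLM {p q : ℕ} :
    Matrix (Fin p) (Fin q) ℝ ≃ₗ[ℝ] (EuclideanSpace ℝ (Fin q) →L[ℝ] EuclideanSpace ℝ (Fin p)) :=
  Matrix.toEuclideanLin.trans LinearMap.toContinuousLinearMap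

open scoped Matrix.Norms.Operator in
theorem continuous_matrixCLM_mexp {n : ℕ} (A : Matrix (Fin n) (Fin n) ℝ) :
    Continuous fun σ => matrixCLM (mexp A σ) :=
  (LinearMap.continuous_of_finiteDimensional matrixCLM.toLinearMap).comp
    (continuous_iff_continuousAt.2 fun σ => (hasDerivAt_exp_smul_const A σ).continuousAt)

theorem stmt_6 (n m : ℕ) (A : Matrix (Fin n) (Fin n) ℝ)
    (B : Matrix (Fin n) (Fin m) ℝ) (k : Matrix (Fin m) (Fin n) ℝ)
    (r : ℝ) (hr : 0 < r) :
    ∃ M L : ℝ, 0 < M ∧ 0 < L ∧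
      ∀ ε : ℝ, ε ∈ Set.Ioc 0 r →
        ∀ (d : ℝ → ℝ), Measurable d → (∀ t, 0 ≤ t → d t ∈ Set.Icc (-1 : ℝ) 1) →
          ∀ (x₀ : EuclideanSpace ℝ (Fin n)) (u₀ : ℝ → EuclideanSpace ℝ (Fin m)),
            ContinuousOn u₀ (Set.Icc (-(r + ε)) 0) →
            u₀ 0 = mv k (mv (mexp A r) x₀) +
              mv k (∫ s in (-r : ℝ)..0, mv (mexp A (-s)) (mv B (u₀ s))) →
            ∀ (x : ℝ → EuclideanSpace ℝ (Fin n)) (u : ℝ → EuclideanSpace ℝ (Fin m)),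
              ContinuousOn x (Set.Ici 0) →
              ContinuousOn u (Set.Ici (-(r + ε))) →
              x 0 = x₀ → (∀ t ∈ Set.Icc (-(r + ε)) (0 : ℝ), u t = u₀ t) →
              (∀ t : ℝ, 0 ≤ t →
                x t = x 0 + ∫ s in (0 : ℝ)..t,
                  (mv A (x s) + mv B (u (s - r - ε * d s)))) →
              (∀ t : ℝ, 0 ≤ t →
                u t = mv k (mv (mexp A r) (x t)) +
                  mv k (∫ s in t..(t + r),
                    mv (mexp A (t + r - s)) (mv B (u (s - r))))) →
              ∀ t : ℝ, 0 ≤ t →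
                ‖x t‖ + ‖u t‖ ≤ M * Real.exp (L * t) *
                  (‖x₀‖ + sSup ((fun s => ‖u₀ s‖) '' Set.Icc (-(r + ε)) 0)) := by
  obtain ⟨M, L, hM, hL, hbound⟩ := exists_norm_add_norm_le_mul_exp (matrixCLM A) (matrixCLM B)
    (matrixCLM k) (continuous_matrixCLM_mexp A).continuousOn hr
  refine ⟨M, L, hM, hL, ?_⟩
  rintro ε ⟨hε, hεr⟩ d hd hd₁ x₀ u₀ hu₀ - x u hx hu rfl hinit hxeq hueq t ht
  have sol : IsClosedLoopSolution (matrixCLM A) (matrixCLM B) (matrixCLM k)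
      (fun σ => matrixCLM (mexp A σ)) r (r + ε) (fun s => s - r - ε * d s) x u :=
    { continuousOn_x := hx
      continuousOn_u := hu
      measurable_delay := (measurable_id.sub_const r).sub (hd.const_mul ε)
      delay_mem := fun s hs => by
        obtain ⟨hlo, hhi⟩ := hd₁ s hs
        constructor <;> nlinarith
      x_eq := hxeq
      u_eq := hueq }
  have hsup : ∀ s ∈ Icc (-(r + ε)) 0,
      ‖u₀ s‖ ≤ sSup ((fun s => ‖u₀ s‖) '' Icc (-(r + ε)) 0) :=
    fun s hs => le_csSup (isCompact_Icc.image_of_continuousOn hu₀.norm).bddAbove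
      (mem_image_of_mem _ hs)
  refine hbound (r + ε) _ x u _ (by linarith) sol ⟨fun s hs => ?_, fun s hs => ?_⟩ t ht
  · rw [hinit s hs]
    linarith [hsup s hs, norm_nonneg (x 0)]
  · obtain rfl : s = 0 := le_antisymm hs.2 hs.1
    linarith [hsup 0 ⟨by linarith, le_rfl⟩, norm_nonneg (u₀ 0)]
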